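/- arXiv:1501.07171 — 2 statements merged into one kernel-verified Lean document; each statement's English description precedes it below -/
import Mathlib

section
/- Cross-differentiation consistency of the covering defining s₀: if u, v are smooth nonvanishing functions of (x,y) satisfying the S-deformable surface system (with η₁, η₂ smooth functions of x and y respectively), then ∂_y(u_y/v) = ∂_x(−v_x/u), i.e., the 1-form (u_y/v) dx − (v_x/u) dy is closed on solutions. -/
/-- Partial derivative with respect to the first variable. -/
noncomputable def pd1 (f : ℝ → ℝ → ℝ) (x y : ℝ) : ℝ := deriv (fun x' => f x' y) x

/-- Partial derivative with respect to the second variable. -/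
noncomputable def pd2 (f : ℝ → ℝ → ℝ) (x y : ℝ) : ℝ := deriv (fun y' => f x y') y

lemma slice1 {f : ℝ → ℝ → ℝ} (hf : ContDiff ℝ (⊤ : ℕ∞) (Function.uncurry f)) (y : ℝ) :
    ContDiff ℝ (⊤ : ℕ∞) (fun x => f x y) :=
  hf.comp (contDiff_id.prodMk contDiff_const)

lemma slice2 {f : ℝ → ℝ → ℝ} (hf : ContDiff ℝ (⊤ : ℕ∞) (Function.uncurry f)) (x : ℝ) :
    ContDiff ℝ (⊤ : ℕ∞) (fun y => f x y) :=
  hf.comp (contDiff_const.prodMk contDiff_id)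

lemma deriv_diff {f : ℝ → ℝ} (hf : ContDiff ℝ (⊤ : ℕ∞) f) : Differentiable ℝ (deriv f) :=
  ((contDiff_infty_iff_deriv.mp (hf.of_le (by simp))).2).differentiable (by simp)

/-- For smooth positive solutions u, v of the S-deformable surface system
(with η₁ = η₁(x), η₂ = η₂(y) smooth and η₁ ≠ η₂), one has
∂_y(u_y/v) = ∂_x(−v_x/u), i.e. the 1-form (u_y/v)dx − (v_x/u)dy is closed. -/
theorem stmt10 (η₁ η₂ : ℝ → ℝ) (hη₁ : ContDiff ℝ (⊤ : ℕ∞) η₁) (hη₂ : ContDiff ℝ (⊤ : ℕ∞) η₂)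
    (u v : ℝ → ℝ → ℝ)
    (hu : ContDiff ℝ (⊤ : ℕ∞) (Function.uncurry u)) (hv : ContDiff ℝ (⊤ : ℕ∞) (Function.uncurry v))
    (hupos : ∀ x y, 0 < u x y) (hvpos : ∀ x y, 0 < v x y)
    (hη : ∀ x y : ℝ, η₁ x ≠ η₂ y)
    (huyy : ∀ x y, pd2 (pd2 u) x y =
      ((1/2) * deriv η₁ x * (v x y) ^ 2 * pd1 v x y
        + (1/2) * deriv η₂ y * u x y * v x y * pd2 u x y
        + (η₁ x - η₂ y) * u x y * pd2 u x y * pd2 v x y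
        + (u x y) ^ 2 * (v x y) ^ 3)
      / (u x y * v x y * (η₁ x - η₂ y)))
    (hvxx : ∀ x y, pd1 (pd1 v) x y =
      ((1/2) * deriv η₁ x * u x y * v x y * pd1 v x y
        + (1/2) * deriv η₂ y * (u x y) ^ 2 * pd2 u x y
        + (η₂ y - η₁ x) * v x y * pd1 v x y * pd1 u x y
        + (u x y) ^ 3 * (v x y) ^ 2)
      / (u x y * v x y * (η₂ y - η₁ x))) :
    ∀ x y, pd2 (fun a b => pd2 u a b / v a b) x y
      = pd1 (fun a b => -(pd1 v a b) / u a b) x y := by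
  intro x y
  have hune : u x y ≠ 0 := (hupos x y).ne'
  have hvne : v x y ≠ 0 := (hvpos x y).ne'
  have hηne : η₁ x - η₂ y ≠ 0 := sub_ne_zero.mpr (hη x y)
  have hηne' : η₂ y - η₁ x ≠ 0 := sub_ne_zero.mpr (Ne.symm (hη x y))
  -- differentiability facts
  have hu2 : DifferentiableAt ℝ (fun b => pd2 u x b) y := deriv_diff (slice2 hu x) y
  have hv2 : DifferentiableAt ℝ (fun b => v x b) y :=
    (slice2 hv x).differentiable (by simp) y
  have hv1 : DifferentiableAt ℝ (fun a => pd1 v a y) x := deriv_diff (slice1 hv y) x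
  have hu1 : DifferentiableAt ℝ (fun a => u a y) x :=
    (slice1 hu y).differentiable (by simp) x
  have L : pd2 (fun a b => pd2 u a b / v a b) x y
      = (pd2 (pd2 u) x y * v x y - pd2 u x y * pd2 v x y) / (v x y) ^ 2 := by
    show deriv (fun b => pd2 u x b / v x b) y = _
    rw [deriv_fun_div hu2 hv2 hvne]
    rfl
  have R : pd1 (fun a b => -(pd1 v a b) / u a b) x y
      = (-(pd1 (pd1 v) x y) * u x y - -(pd1 v x y) * pd1 u x y) / (u x y) ^ 2 := by
    show deriv (fun a => -(pd1 v a y) / u a y) x = _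
    rw [deriv_fun_div hv1.fun_neg hu1 hune, deriv.fun_neg]
    rfl
  rw [L, R, huyy x y, hvxx x y]
  field_simp
  ring
end

section
/- The change of variables reducing η_i to coordinates: if H₁, H₂, β₁₂, β₂₁ satisfy the Gauss–Codazzi system ∂₁H₂ = β₁₂H₁, ∂₂H₁ = β₂₁H₂, ∂₁β₁₂ + ∂₂β₂₁ = 0, η₁∂₁β₁₂ + η₂∂₂β₂₁ + (1/2)η₁′β₁₂ + (1/2)η₂′β₂₁ + H₁H₂ = 0, and η₁, η₂ are smooth with nonvanishing derivatives, then the functions H̃_i defined by H_i = η_i′ H̃_i, expressed in the new coordinates x̃^i = η_i(x^i), satisfy the same system with η_i replaced by the coordinate functions x̃^i: ∂̃₁H̃₂ = β̃₁₂H̃₁, ∂̃₂H̃₁ = β̃₂₁H̃₂, ∂̃₁β̃₁₂ + ∂̃₂β̃₂₁ = 0, x̃¹∂̃₁β̃₁₂ + x̃²∂̃₂β̃₂₁ + (1/2)β̃₁₂ + (1/2)β̃₂₁ + H̃₁H̃₂ = 0, where β̃_{ij} = ∂̃_i H̃_j / H̃_i. -/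
open Function

lemma sliceD1 {F : ℝ → ℝ → ℝ} (hF : ContDiff ℝ (⊤ : ℕ∞) (uncurry F)) (c : ℝ) :
    Differentiable ℝ fun x => F x c :=
  (hF.differentiable (by simp)).comp ((differentiable_id.prodMk (differentiable_const c)))

lemma sliceD2 {F : ℝ → ℝ → ℝ} (hF : ContDiff ℝ (⊤ : ℕ∞) (uncurry F)) (c : ℝ) :
    Differentiable ℝ fun y => F c y :=
  (hF.differentiable (by simp)).comp (((differentiable_const c).prodMk differentiable_id))

lemma comp_pd1 {F : ℝ → ℝ → ℝ} (hF : ContDiff ℝ (⊤ : ℕ∞) (uncurry F)) {g : ℝ → ℝ}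
    (hg : Differentiable ℝ g) (a c : ℝ) :
    deriv (fun x => F (g x) c) a = pd1 F (g a) c * deriv g a := by
  have h : (fun x => F (g x) c) = (fun x => F x c) ∘ g := rfl
  rw [h, deriv_comp (x := a) ((sliceD1 hF c) (g a)) (hg a)]; rfl

lemma comp_pd2 {F : ℝ → ℝ → ℝ} (hF : ContDiff ℝ (⊤ : ℕ∞) (uncurry F)) {g : ℝ → ℝ}
    (hg : Differentiable ℝ g) (c b : ℝ) :
    deriv (fun y => F c (g y)) b = pd2 F c (g b) * deriv g b := by
  have h : (fun y => F c (g y)) = (fun y => F c y) ∘ g := rfl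
  rw [h, deriv_comp (x := b) ((sliceD2 hF c) (g b)) (hg b)]; rfl


/-- If H₁, H₂, β₁₂, β₂₁ satisfy the Gauss–Codazzi system for S-deformable
surfaces with arbitrary η₁(x¹), η₂(x²) having positive derivatives, then in
the coordinates x̃^i = η_i(x^i) the rescaled functions H̃_i = H_i/η_i′ satisfy
the same system with η_i replaced by the coordinate functions x̃^i. -/
theorem stmt13 (η₁ η₂ h₁ h₂ : ℝ → ℝ)
    (hη₁ : ContDiff ℝ (⊤ : ℕ∞) η₁) (hη₂ : ContDiff ℝ (⊤ : ℕ∞) η₂)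
    (hh₁ : ContDiff ℝ (⊤ : ℕ∞) h₁) (hh₂ : ContDiff ℝ (⊤ : ℕ∞) h₂)
    (hη₁' : ∀ t, 0 < deriv η₁ t) (hη₂' : ∀ t, 0 < deriv η₂ t)
    (hinv₁ : ∀ t, h₁ (η₁ t) = t) (hinv₁' : ∀ t, η₁ (h₁ t) = t)
    (hinv₂ : ∀ t, h₂ (η₂ t) = t) (hinv₂' : ∀ t, η₂ (h₂ t) = t)
    (H₁ H₂ β₁₂ β₂₁ : ℝ → ℝ → ℝ)
    (hH₁ : ContDiff ℝ (⊤ : ℕ∞) (Function.uncurry H₁))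
    (hH₂ : ContDiff ℝ (⊤ : ℕ∞) (Function.uncurry H₂))
    (hβ₁₂ : ContDiff ℝ (⊤ : ℕ∞) (Function.uncurry β₁₂))
    (hβ₂₁ : ContDiff ℝ (⊤ : ℕ∞) (Function.uncurry β₂₁))
    (hH₁ne : ∀ x y, H₁ x y ≠ 0) (hH₂ne : ∀ x y, H₂ x y ≠ 0)
    (e₁ : ∀ x y, pd1 H₂ x y = β₁₂ x y * H₁ x y)
    (e₂ : ∀ x y, pd2 H₁ x y = β₂₁ x y * H₂ x y)
    (e₃ : ∀ x y, pd1 β₁₂ x y + pd2 β₂₁ x y = 0)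
    (e₄ : ∀ x y, η₁ x * pd1 β₁₂ x y + η₂ y * pd2 β₂₁ x y
      + (1/2) * deriv η₁ x * β₁₂ x y + (1/2) * deriv η₂ y * β₂₁ x y
      + H₁ x y * H₂ x y = 0) :
    let Ht₁ : ℝ → ℝ → ℝ := fun a b => H₁ (h₁ a) (h₂ b) / deriv η₁ (h₁ a)
    let Ht₂ : ℝ → ℝ → ℝ := fun a b => H₂ (h₁ a) (h₂ b) / deriv η₂ (h₂ b)
    let βt₁₂ : ℝ → ℝ → ℝ := fun a b => pd1 Ht₂ a b / Ht₁ a b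
    let βt₂₁ : ℝ → ℝ → ℝ := fun a b => pd2 Ht₁ a b / Ht₂ a b
    (∀ a b, pd1 Ht₂ a b = βt₁₂ a b * Ht₁ a b) ∧
    (∀ a b, pd2 Ht₁ a b = βt₂₁ a b * Ht₂ a b) ∧
    (∀ a b, pd1 βt₁₂ a b + pd2 βt₂₁ a b = 0) ∧
    (∀ a b, a * pd1 βt₁₂ a b + b * pd2 βt₂₁ a b
      + (1/2) * βt₁₂ a b + (1/2) * βt₂₁ a b + Ht₁ a b * Ht₂ a b = 0) := by
  intro Ht₁ Ht₂ βt₁₂ βt₂₁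
  have hdη₁ : Differentiable ℝ η₁ := hη₁.differentiable (by simp)
  have hdη₂ : Differentiable ℝ η₂ := hη₂.differentiable (by simp)
  have hdh₁ : Differentiable ℝ h₁ := hh₁.differentiable (by simp)
  have hdh₂ : Differentiable ℝ h₂ := hh₂.differentiable (by simp)
  have hη₁ne : ∀ t, deriv η₁ t ≠ 0 := fun t => (hη₁' t).ne'
  have hη₂ne : ∀ t, deriv η₂ t ≠ 0 := fun t => (hη₂' t).ne'
  have dh₁ : ∀ t, deriv h₁ t = (deriv η₁ (h₁ t))⁻¹ := by
    intro t
    have h1 : deriv (η₁ ∘ h₁) t = deriv η₁ (h₁ t) * deriv h₁ t :=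
      deriv_comp (x := t) (hdη₁ _) (hdh₁ _)
    have h2 : (η₁ ∘ h₁) = id := funext hinv₁'
    rw [h2, deriv_id] at h1
    rw [inv_eq_one_div, eq_div_iff (hη₁ne _)]
    linear_combination -h1
  have dh₂ : ∀ t, deriv h₂ t = (deriv η₂ (h₂ t))⁻¹ := by
    intro t
    have h1 : deriv (η₂ ∘ h₂) t = deriv η₂ (h₂ t) * deriv h₂ t :=
      deriv_comp (x := t) (hdη₂ _) (hdh₂ _)
    have h2 : (η₂ ∘ h₂) = id := funext hinv₂'
    rw [h2, deriv_id] at h1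
    rw [inv_eq_one_div, eq_div_iff (hη₂ne _)]
    linear_combination -h1
  have Htne₁ : ∀ a b, Ht₁ a b ≠ 0 := fun a b => div_ne_zero (hH₁ne _ _) (hη₁ne _)
  have Htne₂ : ∀ a b, Ht₂ a b ≠ 0 := fun a b => div_ne_zero (hH₂ne _ _) (hη₂ne _)
  -- closed form for pd1 Ht₂
  have pdHt₂ : ∀ a b, pd1 Ht₂ a b =
      β₁₂ (h₁ a) (h₂ b) * H₁ (h₁ a) (h₂ b) * (deriv η₁ (h₁ a))⁻¹ * (deriv η₂ (h₂ b))⁻¹ := by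
    intro a b
    have h : (fun a' => Ht₂ a' b) = fun a' => H₂ (h₁ a') (h₂ b) * (deriv η₂ (h₂ b))⁻¹ := by
      funext a'; simp [Ht₂, div_eq_mul_inv]
    have hdiff : DifferentiableAt ℝ (fun a' => H₂ (h₁ a') (h₂ b)) a :=
      ((sliceD1 hH₂ (h₂ b)).comp hdh₁) a
    simp only [pd1, h]
    rw [deriv_mul_const hdiff, comp_pd1 hH₂ hdh₁, dh₁, e₁]
    try ring
  have pdHt₁ : ∀ a b, pd2 Ht₁ a b =
      β₂₁ (h₁ a) (h₂ b) * H₂ (h₁ a) (h₂ b) * (deriv η₁ (h₁ a))⁻¹ * (deriv η₂ (h₂ b))⁻¹ := by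
    intro a b
    have h : (fun b' => Ht₁ a b') = fun b' => H₁ (h₁ a) (h₂ b') * (deriv η₁ (h₁ a))⁻¹ := by
      funext b'; simp [Ht₁, div_eq_mul_inv]
    have hdiff : DifferentiableAt ℝ (fun b' => H₁ (h₁ a) (h₂ b')) b :=
      ((sliceD2 hH₁ (h₁ a)).comp hdh₂) b
    simp only [pd2, h]
    rw [deriv_mul_const hdiff, comp_pd2 hH₁ hdh₂, dh₂, e₂]
    try ring
  have βt₁₂eq : ∀ a b, βt₁₂ a b = β₁₂ (h₁ a) (h₂ b) * (deriv η₂ (h₂ b))⁻¹ := by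
    intro a b
    show pd1 Ht₂ a b / Ht₁ a b = _
    rw [pdHt₂]
    show _ / (H₁ (h₁ a) (h₂ b) / deriv η₁ (h₁ a)) = _
    field_simp [hH₁ne (h₁ a) (h₂ b), hη₁ne (h₁ a), hη₂ne (h₂ b)]
  have βt₂₁eq : ∀ a b, βt₂₁ a b = β₂₁ (h₁ a) (h₂ b) * (deriv η₁ (h₁ a))⁻¹ := by
    intro a b
    show pd2 Ht₁ a b / Ht₂ a b = _
    rw [pdHt₁]
    show _ / (H₂ (h₁ a) (h₂ b) / deriv η₂ (h₂ b)) = _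
    field_simp [hH₂ne (h₁ a) (h₂ b), hη₁ne (h₁ a), hη₂ne (h₂ b)]
  have pdβt₁₂ : ∀ a b, pd1 βt₁₂ a b =
      pd1 β₁₂ (h₁ a) (h₂ b) * (deriv η₁ (h₁ a))⁻¹ * (deriv η₂ (h₂ b))⁻¹ := by
    intro a b
    have h : (fun a' => βt₁₂ a' b) = fun a' => β₁₂ (h₁ a') (h₂ b) * (deriv η₂ (h₂ b))⁻¹ :=
      funext fun a' => βt₁₂eq a' b
    have hdiff : DifferentiableAt ℝ (fun a' => β₁₂ (h₁ a') (h₂ b)) a :=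
      ((sliceD1 hβ₁₂ (h₂ b)).comp hdh₁) a
    simp only [pd1, h]
    rw [deriv_mul_const hdiff, comp_pd1 hβ₁₂ hdh₁, dh₁]
    simp only [pd1]
    try ring
  have pdβt₂₁ : ∀ a b, pd2 βt₂₁ a b =
      pd2 β₂₁ (h₁ a) (h₂ b) * (deriv η₁ (h₁ a))⁻¹ * (deriv η₂ (h₂ b))⁻¹ := by
    intro a b
    have h : (fun b' => βt₂₁ a b') = fun b' => β₂₁ (h₁ a) (h₂ b') * (deriv η₁ (h₁ a))⁻¹ :=
      funext fun b' => βt₂₁eq a b'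
    have hdiff : DifferentiableAt ℝ (fun b' => β₂₁ (h₁ a) (h₂ b')) b :=
      ((sliceD2 hβ₂₁ (h₁ a)).comp hdh₂) b
    simp only [pd2, h]
    rw [deriv_mul_const hdiff, comp_pd2 hβ₂₁ hdh₂, dh₂]
    simp only [pd2]
    try ring
  refine ⟨fun a b => ?_, fun a b => ?_, fun a b => ?_, fun a b => ?_⟩
  · show pd1 Ht₂ a b = pd1 Ht₂ a b / Ht₁ a b * Ht₁ a b
    rw [div_mul_cancel₀ _ (Htne₁ a b)]
  · show pd2 Ht₁ a b = pd2 Ht₁ a b / Ht₂ a b * Ht₂ a b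
    rw [div_mul_cancel₀ _ (Htne₂ a b)]
  · rw [pdβt₁₂, pdβt₂₁]
    linear_combination (deriv η₁ (h₁ a))⁻¹ * (deriv η₂ (h₂ b))⁻¹ * e₃ (h₁ a) (h₂ b)
  · rw [pdβt₁₂, pdβt₂₁, βt₁₂eq, βt₂₁eq]
    show _ + _ + _ + _ + (H₁ (h₁ a) (h₂ b) / deriv η₁ (h₁ a)) * (H₂ (h₁ a) (h₂ b) / deriv η₂ (h₂ b)) = 0
    have E := e₄ (h₁ a) (h₂ b)
    have ha : a = η₁ (h₁ a) := (hinv₁' a).symm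
    have hb : b = η₂ (h₂ b) := (hinv₂' b).symm
    have c1 : deriv η₁ (h₁ a) * (deriv η₁ (h₁ a))⁻¹ = 1 := mul_inv_cancel₀ (hη₁ne _)
    have c2 : deriv η₂ (h₂ b) * (deriv η₂ (h₂ b))⁻¹ = 1 := mul_inv_cancel₀ (hη₂ne _)
    linear_combination ((deriv η₁ (h₁ a))⁻¹ * (deriv η₂ (h₂ b))⁻¹) * E
      + pd1 β₁₂ (h₁ a) (h₂ b) * (deriv η₁ (h₁ a))⁻¹ * (deriv η₂ (h₂ b))⁻¹ * ha
      + pd2 β₂₁ (h₁ a) (h₂ b) * (deriv η₁ (h₁ a))⁻¹ * (deriv η₂ (h₂ b))⁻¹ * hb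
      - (1/2) * β₁₂ (h₁ a) (h₂ b) * (deriv η₂ (h₂ b))⁻¹ * c1
      - (1/2) * β₂₁ (h₁ a) (h₂ b) * (deriv η₁ (h₁ a))⁻¹ * c2
end
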